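/- Let d ≥ 1, Ω ⊆ ℝ^d open, ρ : Ω → (0,∞) smooth, h : (0,∞) → ℝ smooth, g(ρ) = ρ h'(ρ) − h(ρ), and φ : (0,∞) → ℝ smooth with ρ φ'(ρ) = h'(ρ) for all ρ > 0. Then on Ω: 2 ρ ∇( h'(ρ) div( h'(ρ) ∇√ρ ) / √ρ ) = div( h(ρ) ∇²(φ(ρ)) ) + ∇( g(ρ) Δ(φ(ρ)) ). -/

import Mathlib

open MeasureTheory Real

noncomputable section

/-- Partial derivative of a scalar field in the coordinate direction `i`. -/
def pd {d : ℕ} (i : Fin d) (f : (Fin d → ℝ) → ℝ) (x : Fin d → ℝ) : ℝ :=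
  fderiv ℝ f x (Pi.single i 1)

/-- Gradient of a scalar field. -/
def grad {d : ℕ} (f : (Fin d → ℝ) → ℝ) (x : Fin d → ℝ) : Fin d → ℝ :=
  fun i => pd i f x

/-- Divergence of a vector field. -/
def dvg {d : ℕ} (u : (Fin d → ℝ) → (Fin d → ℝ)) (x : Fin d → ℝ) : ℝ :=
  ∑ i, pd i (fun y => u y i) x

/-- Row-wise divergence of a matrix field: `(dvgM M x) i = ∑ j, ∂_j M_{ij}`. -/
def dvgM {d : ℕ} (M : (Fin d → ℝ) → Fin d → Fin d → ℝ) (x : Fin d → ℝ) : Fin d → ℝ :=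
  fun i => ∑ j, pd j (fun y => M y i j) x

/-- Hessian of a scalar field. -/
def hess {d : ℕ} (f : (Fin d → ℝ) → ℝ) (x : Fin d → ℝ) : Fin d → Fin d → ℝ :=
  fun i j => pd i (fun y => pd j f y) x

/-- Laplacian of a scalar field. -/
def lap {d : ℕ} (f : (Fin d → ℝ) → ℝ) (x : Fin d → ℝ) : ℝ :=
  ∑ i, pd i (fun y => pd i f y) x

/-- Jacobian matrix of a vector field: `(jac u x) i j = ∂_j u_i`. -/
def jac {d : ℕ} (u : (Fin d → ℝ) → (Fin d → ℝ)) (x : Fin d → ℝ) : Fin d → Fin d → ℝ :=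
  fun i j => pd j (fun y => u y i) x

/-- Symmetric part of the gradient of a vector field, `Du = (∇u + (∇u)ᵀ)/2`. -/
def symD {d : ℕ} (u : (Fin d → ℝ) → (Fin d → ℝ)) (x : Fin d → ℝ) : Fin d → Fin d → ℝ :=
  fun i j => (jac u x i j + jac u x j i) / 2

/-- Antisymmetric part of the gradient of a vector field, `Au = (∇u − (∇u)ᵀ)/2`. -/
def antiD {d : ℕ} (u : (Fin d → ℝ) → (Fin d → ℝ)) (x : Fin d → ℝ) : Fin d → Fin d → ℝ :=
  fun i j => (jac u x i j - jac u x j i) / 2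

/-- Tensor product of two vectors: `(a ⊗ b)_{ij} = a_i b_j`. -/
def tens {d : ℕ} (a b : Fin d → ℝ) : Fin d → Fin d → ℝ := fun i j => a i * b j

/-- ℤ^d-periodicity: a function of this kind descends to the torus `T^d = ℝ^d/ℤ^d`. -/
def SpacePeriodic {d : ℕ} {E : Type*} (f : (Fin d → ℝ) → E) : Prop :=
  ∀ x : Fin d → ℝ, ∀ n : Fin d → ℤ, f (x + fun i => (n i : ℝ)) = f x

/-- Fundamental domain of the torus `T^d = ℝ^d/ℤ^d` (with its probability Lebesgue measure). -/
def unitBox (d : ℕ) : Set (Fin d → ℝ) := Set.Icc 0 1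

open Topology Set
open scoped ContDiff

theorem pd_congr {d : ℕ} {i : Fin d} {f g : (Fin d → ℝ) → ℝ} {x : Fin d → ℝ}
    (hfg : f =ᶠ[nhds x] g) : pd i f x = pd i g x := by
  unfold pd; rw [hfg.fderiv_eq]

theorem pd_add {d : ℕ} {i : Fin d} {f g : (Fin d → ℝ) → ℝ} {x : Fin d → ℝ}
    (hf : DifferentiableAt ℝ f x) (hg : DifferentiableAt ℝ g x) :
    pd i (fun y => f y + g y) x = pd i f x + pd i g x := by
  unfold pd; rw [fderiv_fun_add hf hg]; rfl

theorem pd_mul {d : ℕ} {i : Fin d} {f g : (Fin d → ℝ) → ℝ} {x : Fin d → ℝ}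
    (hf : DifferentiableAt ℝ f x) (hg : DifferentiableAt ℝ g x) :
    pd i (fun y => f y * g y) x = f x * pd i g x + pd i f x * g x := by
  unfold pd; rw [fderiv_fun_mul hf hg]; simp [mul_comm]

theorem pd_sum {d n : ℕ} {i : Fin d} {f : Fin n → (Fin d → ℝ) → ℝ} {x : Fin d → ℝ}
    (hf : ∀ j, DifferentiableAt ℝ (f j) x) :
    pd i (fun y => ∑ j, f j y) x = ∑ j, pd i (f j) x := by
  unfold pd
  rw [fderiv_fun_sum (fun j _ => hf j)]
  simp

theorem pd_comp {d : ℕ} {i : Fin d} {F : ℝ → ℝ} {F' : ℝ} {f : (Fin d → ℝ) → ℝ} {x : Fin d → ℝ}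
    (hF : HasDerivAt F F' (f x)) (hf : DifferentiableAt ℝ f x) :
    pd i (fun y => F (f y)) x = F' * pd i f x := by
  unfold pd
  rw [show (fun y => F (f y)) = F ∘ f from rfl,
    (hF.comp_hasFDerivAt x hf.hasFDerivAt).fderiv]
  simp [mul_comm]

theorem diffAt_comp {d : ℕ} {F : ℝ → ℝ} {F' : ℝ} {f : (Fin d → ℝ) → ℝ} {x : Fin d → ℝ}
    (hF : HasDerivAt F F' (f x)) (hf : DifferentiableAt ℝ f x) :
    DifferentiableAt ℝ (fun y => F (f y)) x :=
  (hF.comp_hasFDerivAt x hf.hasFDerivAt).differentiableAt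

theorem contDiffOn_pd {d : ℕ} {Ω : Set (Fin d → ℝ)} (hΩ : IsOpen Ω)
    {f : (Fin d → ℝ) → ℝ} (hf : ContDiffOn ℝ ∞ f Ω) (j : Fin d) :
    ContDiffOn ℝ ∞ (fun y => pd j f y) Ω := by
  have h1 : ContDiffOn ℝ ∞ (fderiv ℝ f) Ω :=
    hf.fderiv_of_isOpen hΩ (le_of_eq (show ∞ + 1 = ∞ from rfl))
  exact ((ContinuousLinearMap.apply ℝ ℝ (Pi.single j 1 : Fin d → ℝ)).contDiff.comp_contDiffOn h1)

theorem pd_comm {d : ℕ} {i j : Fin d} {f : (Fin d → ℝ) → ℝ} {x : Fin d → ℝ}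
    (hf : ContDiffAt ℝ ∞ f x) :
    pd i (fun y => pd j f y) x = pd j (fun y => pd i f y) x := by
  have hd : DifferentiableAt ℝ (fderiv ℝ f) x :=
    (hf.fderiv_right (m := 1) (WithTop.coe_le_coe.2 le_top)).differentiableAt one_ne_zero
  have key : ∀ (a : Fin d) (v : Fin d → ℝ), pd a (fun y => fderiv ℝ f y v) x
      = fderiv ℝ (fderiv ℝ f) x (Pi.single a 1) v := by
    intro a v
    unfold pd
    rw [fderiv_clm_apply hd (differentiableAt_const v)]
    simp
  have hs := hf.isSymmSndFDerivAt (by simp; exact WithTop.coe_le_coe.2 le_top)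
  calc pd i (fun y => pd j f y) x
      = fderiv ℝ (fderiv ℝ f) x (Pi.single i 1) (Pi.single j 1) := key i _
    _ = fderiv ℝ (fderiv ℝ f) x (Pi.single j 1) (Pi.single i 1) := hs _ _
    _ = pd j (fun y => pd i f y) x := (key j _).symm

theorem diffAt_of_contDiffOn {d : ℕ} {Ω : Set (Fin d → ℝ)} (hΩ : IsOpen Ω)
    {f : (Fin d → ℝ) → ℝ} (hf : ContDiffOn ℝ ∞ f Ω) {y : Fin d → ℝ} (hy : y ∈ Ω) :
    DifferentiableAt ℝ f y :=
  (hf.contDiffAt (hΩ.mem_nhds hy)).differentiableAt (by simp)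

section Facts
variable {d : ℕ} {Ω : Set (Fin d → ℝ)} (hΩ : IsOpen Ω) {ρ : (Fin d → ℝ) → ℝ}
  (hρpos : ∀ x ∈ Ω, 0 < ρ x) (hρ : ContDiffOn ℝ ∞ ρ Ω)

include hΩ hρpos hρ

theorem sqrt_pd {y : Fin d → ℝ} (hy : y ∈ Ω) (j : Fin d) :
    pd j (fun w => Real.sqrt (ρ w)) y = 1 / (2 * Real.sqrt (ρ y)) * pd j ρ y :=
  pd_comp (Real.hasDerivAt_sqrt (hρpos y hy).ne') (diffAt_of_contDiffOn hΩ hρ hy)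

theorem factB {h1 G G' : ℝ → ℝ}
    (hG : ∀ t, 0 < t → HasDerivAt G (G' t) t)
    (hGval : ∀ t, 0 < t → h1 t / (2 * Real.sqrt t) = G t)
    {y : Fin d → ℝ} (hy : y ∈ Ω) :
    dvg (fun z => h1 (ρ z) • grad (fun w => Real.sqrt (ρ w)) z) y
      = G' (ρ y) * (∑ j, pd j ρ y * pd j ρ y)
        + G (ρ y) * (∑ j, pd j (fun z => pd j ρ z) y) := by
  have hρy : DifferentiableAt ℝ ρ y := diffAt_of_contDiffOn hΩ hρ hy
  have each : ∀ j : Fin d, pd j (fun z => (h1 (ρ z) • grad (fun w => Real.sqrt (ρ w)) z) j) y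
      = G' (ρ y) * (pd j ρ y * pd j ρ y) + G (ρ y) * pd j (fun z => pd j ρ z) y := by
    intro j
    have hP1d : DifferentiableAt ℝ (fun z => pd j ρ z) y :=
      diffAt_of_contDiffOn hΩ (contDiffOn_pd hΩ hρ j) hy
    have hcong : (fun z => (h1 (ρ z) • grad (fun w => Real.sqrt (ρ w)) z) j)
        =ᶠ[𝓝 y] fun z => G (ρ z) * pd j ρ z := by
      filter_upwards [hΩ.mem_nhds hy] with z hz
      simp only [Pi.smul_apply, smul_eq_mul, grad]
      rw [sqrt_pd hΩ hρpos hρ hz j, ← hGval _ (hρpos z hz)]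
      ring
    rw [pd_congr hcong,
      pd_mul (diffAt_comp (hG _ (hρpos y hy)) hρy) hP1d,
      pd_comp (hG _ (hρpos y hy)) hρy]
    ring
  unfold dvg
  rw [Finset.sum_congr rfl (fun j _ => each j), Finset.sum_add_distrib,
    ← Finset.mul_sum, ← Finset.mul_sum]

theorem factHess {φ f1 f2 : ℝ → ℝ}
    (hDφ : ∀ t, 0 < t → HasDerivAt φ (f1 t) t)
    (hDf1 : ∀ t, 0 < t → HasDerivAt f1 (f2 t) t)
    {y : Fin d → ℝ} (hy : y ∈ Ω) (i j : Fin d) :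
    hess (fun z => φ (ρ z)) y i j
      = f1 (ρ y) * pd i (fun z => pd j ρ z) y
        + (f2 (ρ y) * pd i ρ y) * pd j ρ y := by
  have hρy : DifferentiableAt ℝ ρ y := diffAt_of_contDiffOn hΩ hρ hy
  have hP1d : DifferentiableAt ℝ (fun z => pd j ρ z) y :=
    diffAt_of_contDiffOn hΩ (contDiffOn_pd hΩ hρ j) hy
  have hcong : (fun z => pd j (fun w => φ (ρ w)) z)
      =ᶠ[𝓝 y] fun z => f1 (ρ z) * pd j ρ z := by
    filter_upwards [hΩ.mem_nhds hy] with z hz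
    rw [pd_comp (hDφ _ (hρpos z hz)) (diffAt_of_contDiffOn hΩ hρ hz)]
  unfold hess
  rw [pd_congr hcong,
    pd_mul (diffAt_comp (hDf1 _ (hρpos y hy)) hρy) hP1d,
    pd_comp (hDf1 _ (hρpos y hy)) hρy]

theorem factLap {φ f1 f2 : ℝ → ℝ}
    (hDφ : ∀ t, 0 < t → HasDerivAt φ (f1 t) t)
    (hDf1 : ∀ t, 0 < t → HasDerivAt f1 (f2 t) t)
    {y : Fin d → ℝ} (hy : y ∈ Ω) :
    lap (fun z => φ (ρ z)) y
      = f2 (ρ y) * (∑ j, pd j ρ y * pd j ρ y)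
        + f1 (ρ y) * (∑ j, pd j (fun z => pd j ρ z) y) := by
  have : lap (fun z => φ (ρ z)) y = ∑ j, hess (fun z => φ (ρ z)) y j j := rfl
  rw [this, Finset.sum_congr rfl (fun j _ => factHess hΩ hρpos hρ hDφ hDf1 hy j j)]
  simp only [Finset.sum_add_distrib, Finset.mul_sum, mul_assoc]
  ring

end Facts

set_option maxHeartbeats 2000000 in

lemma keyalg (S T K θ ai r e h0 h1v h2v h3v f1v f2v f3v Gr G'r Wr Pr Qr PD QD : ℝ)
    (hepos : 0 < e) (hee : e * e = r)
    (rel1 : r * f1v = h1v) (rel2 : f1v + r * f2v = h2v) (rel3 : 2 * f2v + r * f3v = h3v)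
    (hGr : Gr = h1v / (2*e))
    (hG'r : G'r = h2v / (2*e) - h1v / (4*(r*e)))
    (hWr : Wr = (h3v * (2*e) - h2v * (2*(1/(2*e)))) / (2*e)^2
              - (h2v * (4*(r*e)) - h1v * (4*(1*e + r*(1/(2*e))))) / (4*(r*e))^2)
    (hPr : Pr = h1v * G'r / e) (hQr : Qr = h1v * Gr / e)
    (hPD : PD = ((h2v * G'r + h1v * Wr) * e - h1v * G'r * (1/(2*e))) / e^2)
    (hQD : QD = ((h2v * Gr + h1v * G'r) * e - h1v * Gr * (1/(2*e))) / e^2) :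
    2 * r * (PD * ai * S + Pr * (2*θ) + QD * ai * T + Qr * K)
    = ((h1v*f2v + h0*f3v) * ai * S + (h0*f2v) * (ai*T + θ) + (h1v*f1v + h0*f2v) * θ + (h0*f1v) * K)
      + (((1*h1v + r*h2v) - h1v) * ai * (f2v*S + f1v*T)
        + (r*h1v - h0) * ((f3v*ai)*S + f2v*(2*θ) + (f2v*ai)*T + f1v*K)) := by
  subst hGr hG'r hWr hPr hQr hPD hQD
  have hrpos : 0 < r := by nlinarith
  have he : e ≠ 0 := ne_of_gt hepos
  have hr : r ≠ 0 := ne_of_gt hrpos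
  have hf1 : f1v = h1v / r := by field_simp; linarith [rel1]
  have hf2 : f2v = (h2v - f1v) / r := by field_simp; linarith [rel2]
  have hf3 : f3v = (h3v - 2*f2v) / r := by field_simp; linarith [rel3]
  subst hf3 hf2 hf1
  rw [← hee]
  field_simp
  ring


theorem statement1 (d : ℕ) (hd : 1 ≤ d) (Ω : Set (Fin d → ℝ)) (hΩ : IsOpen Ω)
    (ρ : (Fin d → ℝ) → ℝ) (hρpos : ∀ x ∈ Ω, 0 < ρ x) (hρ : ContDiffOn ℝ (⊤ : ℕ∞) ρ Ω)
    (h φ : ℝ → ℝ) (hh : ContDiffOn ℝ (⊤ : ℕ∞) h (Set.Ioi 0)) (hφ : ContDiffOn ℝ (⊤ : ℕ∞) φ (Set.Ioi 0))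
    (hφ' : ∀ r : ℝ, 0 < r → r * deriv φ r = deriv h r) :
    ∀ x ∈ Ω, ∀ i : Fin d,
      2 * ρ x * grad (fun y => deriv h (ρ y) *
          dvg (fun z => deriv h (ρ z) • grad (fun w => Real.sqrt (ρ w)) z) y /
          Real.sqrt (ρ y)) x i
        = dvgM (fun y i' j => h (ρ y) * hess (fun z => φ (ρ z)) y i' j) x i
          + grad (fun y => (ρ y * deriv h (ρ y) - h (ρ y)) * lap (fun z => φ (ρ z)) y) x i := by
  intro x hx i
  have hρS : ContDiffOn ℝ ∞ ρ Ω := hρ.of_le (by simp)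
  have hhS : ContDiffOn ℝ ∞ h (Set.Ioi 0) := hh.of_le (by simp)
  have hφS : ContDiffOn ℝ ∞ φ (Set.Ioi 0) := hφ.of_le (by simp)
  have hle : (∞ : WithTop ℕ∞) + 1 ≤ ∞ := le_of_eq rfl
  have hh1s : ContDiffOn ℝ ∞ (deriv h) (Set.Ioi 0) := hhS.deriv_of_isOpen isOpen_Ioi hle
  have hh2s : ContDiffOn ℝ ∞ (deriv (deriv h)) (Set.Ioi 0) := hh1s.deriv_of_isOpen isOpen_Ioi hle
  have hφ1s : ContDiffOn ℝ ∞ (deriv φ) (Set.Ioi 0) := hφS.deriv_of_isOpen isOpen_Ioi hle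
  have hφ2s : ContDiffOn ℝ ∞ (deriv (deriv φ)) (Set.Ioi 0) := hφ1s.deriv_of_isOpen isOpen_Ioi hle
  have hdiff1D : ∀ (F : ℝ → ℝ), ContDiffOn ℝ ∞ F (Set.Ioi 0) → ∀ t : ℝ, 0 < t →
      HasDerivAt F (deriv F t) t := fun F hF t ht =>
    ((hF.contDiffAt (Ioi_mem_nhds ht)).differentiableAt (by simp)).hasDerivAt
  have hD_h : ∀ t : ℝ, 0 < t → HasDerivAt h (deriv h t) t := hdiff1D h hhS
  have hD_h1 : ∀ t : ℝ, 0 < t → HasDerivAt (deriv h) (deriv (deriv h) t) t := hdiff1D _ hh1s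
  have hD_h2 : ∀ t : ℝ, 0 < t → HasDerivAt (deriv (deriv h)) (deriv (deriv (deriv h)) t) t :=
    hdiff1D _ hh2s
  have hD_f1 : ∀ t : ℝ, 0 < t → HasDerivAt (deriv φ) (deriv (deriv φ) t) t := hdiff1D _ hφ1s
  have hD_f2 : ∀ t : ℝ, 0 < t → HasDerivAt (deriv (deriv φ)) (deriv (deriv (deriv φ)) t) t :=
    hdiff1D _ hφ2s
  have hrpos : 0 < ρ x := hρpos x hx
  have hepos : 0 < Real.sqrt (ρ x) := Real.sqrt_pos.2 hrpos
  have hee : Real.sqrt (ρ x) * Real.sqrt (ρ x) = ρ x := Real.mul_self_sqrt hrpos.le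
  -- relations between derivatives of φ and h
  have rel1 : ρ x * deriv φ (ρ x) = deriv h (ρ x) := hφ' _ hrpos
  have rel2 : ∀ t : ℝ, 0 < t → deriv φ t + t * deriv (deriv φ) t = deriv (deriv h) t := by
    intro t ht
    have hev : (fun u => u * deriv φ u) =ᶠ[𝓝 t] deriv h :=
      Filter.eventually_of_mem (Ioi_mem_nhds ht) (fun u hu => hφ' u hu)
    have h1 : HasDerivAt (fun u => u * deriv φ u) (1 * deriv φ t + t * deriv (deriv φ) t) t :=
      (hasDerivAt_id t).mul (hD_f1 t ht)
    have h2 := h1.deriv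
    rw [hev.deriv_eq] at h2
    linarith [h2]
  have rel3 : 2 * deriv (deriv φ) (ρ x) + ρ x * deriv (deriv (deriv φ)) (ρ x)
      = deriv (deriv (deriv h)) (ρ x) := by
    have hev : (fun u => deriv φ u + u * deriv (deriv φ) u) =ᶠ[𝓝 (ρ x)] deriv (deriv h) :=
      Filter.eventually_of_mem (Ioi_mem_nhds hrpos) (fun u hu => rel2 u hu)
    have h1 : HasDerivAt (fun u => deriv φ u + u * deriv (deriv φ) u)
        (deriv (deriv φ) (ρ x) + (1 * deriv (deriv φ) (ρ x)
          + ρ x * deriv (deriv (deriv φ)) (ρ x))) (ρ x) :=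
      (hD_f1 _ hrpos).add ((hasDerivAt_id (ρ x)).mul (hD_f2 _ hrpos))
    have h2 := h1.deriv
    rw [hev.deriv_eq] at h2
    linarith [h2]
  -- derivative of G
  have hD_G : ∀ t : ℝ, 0 < t → HasDerivAt (fun u => deriv h u / (2 * Real.sqrt u))
      (deriv (deriv h) t / (2 * Real.sqrt t) - deriv h t / (4 * (t * Real.sqrt t))) t := by
    intro t ht
    have hst : 0 < Real.sqrt t := Real.sqrt_pos.2 ht
    have base := (hD_h1 t ht).fun_div ((Real.hasDerivAt_sqrt ht.ne').const_mul 2)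
      (by positivity : (2 : ℝ) * Real.sqrt t ≠ 0)
    refine base.congr_deriv ?_
    have hs2 : Real.sqrt t * Real.sqrt t = t := Real.mul_self_sqrt ht.le
    set s := Real.sqrt t with hs
    rw [← hs2]
    have hsne : s ≠ 0 := ne_of_gt hst
    field_simp
    ring
  -- differentiability of partial derivative fields
  have hρx : DifferentiableAt ℝ ρ x := diffAt_of_contDiffOn hΩ hρS hx
  have hd1 : ∀ j : Fin d, DifferentiableAt ℝ (fun y => pd j ρ y) x :=
    fun j => diffAt_of_contDiffOn hΩ (contDiffOn_pd hΩ hρS j) hx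
  have hd2 : ∀ k l : Fin d, DifferentiableAt ℝ (fun y => pd k (fun z => pd l ρ z) y) x :=
    fun k l => diffAt_of_contDiffOn hΩ (contDiffOn_pd hΩ (contDiffOn_pd hΩ hρS l) k) hx
  have hρat : ContDiffAt ℝ ∞ ρ x := hρS.contDiffAt (hΩ.mem_nhds hx)
  have hP1at : ∀ j : Fin d, ContDiffAt ℝ ∞ (fun z => pd j ρ z) x :=
    fun j => (contDiffOn_pd hΩ hρS j).contDiffAt (hΩ.mem_nhds hx)
  have hσd : DifferentiableAt ℝ (fun y => ∑ j, pd j ρ y * pd j ρ y) x := by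
    apply DifferentiableAt.fun_sum
    exact fun j _ => (hd1 j).mul (hd1 j)
  have hτd : DifferentiableAt ℝ (fun y => ∑ j, pd j (fun z => pd j ρ z) y) x := by
    apply DifferentiableAt.fun_sum
    exact fun j _ => hd2 j j
  have epdσ : pd i (fun y => ∑ j, pd j ρ y * pd j ρ y) x
      = 2 * (∑ j, pd j ρ x * pd i (fun y => pd j ρ y) x) := by
    rw [pd_sum (fun j => (hd1 j).fun_mul (hd1 j)), Finset.mul_sum]
    refine Finset.sum_congr rfl fun j _ => ?_
    rw [pd_mul (hd1 j) (hd1 j)]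
    ring
  have epdτ : pd i (fun y => ∑ j, pd j (fun z => pd j ρ z) y) x
      = ∑ j, pd i (fun y => pd j (fun z => pd j ρ z) y) x := pd_sum (fun j => hd2 j j)
  -- LHS computation
  have hD_G'r : HasDerivAt (fun u => deriv (deriv h) u / (2 * Real.sqrt u)
        - deriv h u / (4 * (u * Real.sqrt u)))
      ((deriv (deriv (deriv h)) (ρ x) * (2 * Real.sqrt (ρ x)) - deriv (deriv h) (ρ x) * (2 * (1 / (2 * Real.sqrt (ρ x))))) / (2 * Real.sqrt (ρ x)) ^ 2 - (deriv (deriv h) (ρ x) * (4 * (ρ x * Real.sqrt (ρ x))) - deriv h (ρ x) * (4 * (1 * Real.sqrt (ρ x) + ρ x * (1 / (2 * Real.sqrt (ρ x)))))) / (4 * (ρ x * Real.sqrt (ρ x))) ^ 2) (ρ x) :=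
    ((hD_h2 _ hrpos).div ((Real.hasDerivAt_sqrt hrpos.ne').const_mul 2)
        (by positivity)).sub
      ((hD_h1 _ hrpos).div
        (((hasDerivAt_id (ρ x)).mul (Real.hasDerivAt_sqrt hrpos.ne')).const_mul 4)
        (by positivity))
  have hD_P : HasDerivAt (fun u => deriv h u * (deriv (deriv h) u / (2 * Real.sqrt u)
        - deriv h u / (4 * (u * Real.sqrt u))) / Real.sqrt u)
      (((deriv (deriv h) (ρ x) * (deriv (deriv h) (ρ x) / (2 * Real.sqrt (ρ x)) - deriv h (ρ x) / (4 * (ρ x * Real.sqrt (ρ x)))) + deriv h (ρ x) * ((deriv (deriv (deriv h)) (ρ x) * (2 * Real.sqrt (ρ x)) - deriv (deriv h) (ρ x) * (2 * (1 / (2 * Real.sqrt (ρ x))))) / (2 * Real.sqrt (ρ x)) ^ 2 - (deriv (deriv h) (ρ x) * (4 * (ρ x * Real.sqrt (ρ x))) - deriv h (ρ x) * (4 * (1 * Real.sqrt (ρ x) + ρ x * (1 / (2 * Real.sqrt (ρ x)))))) / (4 * (ρ x * Real.sqrt (ρ x))) ^ 2)) * Real.sqrt (ρ x) - deriv h (ρ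 x) * (deriv (deriv h) (ρ x) / (2 * Real.sqrt (ρ x)) - deriv h (ρ x) / (4 * (ρ x * Real.sqrt (ρ x)))) * (1 / (2 * Real.sqrt (ρ x)))) / Real.sqrt (ρ x) ^ 2) (ρ x) :=
    ((hD_h1 _ hrpos).mul hD_G'r).div (Real.hasDerivAt_sqrt hrpos.ne') (ne_of_gt hepos)
  have hD_Q : HasDerivAt (fun u => deriv h u * (deriv h u / (2 * Real.sqrt u)) / Real.sqrt u)
      (((deriv (deriv h) (ρ x) * (deriv h (ρ x) / (2 * Real.sqrt (ρ x))) + deriv h (ρ x) * (deriv (deriv h) (ρ x) / (2 * Real.sqrt (ρ x)) - deriv h (ρ x) / (4 * (ρ x * Real.sqrt (ρ x))))) * Real.sqrt (ρ x) - deriv h (ρ x) * (deriv h (ρ x) / (2 * Real.sqrt (ρ x))) * (1 / (2 * Real.sqrt (ρ x)))) / Real.sqrt (ρ x) ^ 2) (ρ x) :=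
    ((hD_h1 _ hrpos).mul (hD_G _ hrpos)).div (Real.hasDerivAt_sqrt hrpos.ne') (ne_of_gt hepos)
  have eL : grad (fun y => deriv h (ρ y) *
          dvg (fun z => deriv h (ρ z) • grad (fun w => Real.sqrt (ρ w)) z) y /
          Real.sqrt (ρ y)) x i
      = (((deriv (deriv h) (ρ x) * (deriv (deriv h) (ρ x) / (2 * Real.sqrt (ρ x)) - deriv h (ρ x) / (4 * (ρ x * Real.sqrt (ρ x)))) + deriv h (ρ x) * ((deriv (deriv (deriv h)) (ρ x) * (2 * Real.sqrt (ρ x)) - deriv (deriv h) (ρ x) * (2 * (1 / (2 * Real.sqrt (ρ x))))) / (2 * Real.sqrt (ρ x)) ^ 2 - (deriv (deriv h) (ρ x) * (4 * (ρ x * Real.sqrt (ρ x))) - deriv h (ρ x) * (4 * (1 * Real.sqrt (ρ x) + ρ x * (1 / (2 * Real.sqrt (ρ x)))))) / (4 * (ρ x * Real.sqrt (ρ x))) ^ 2)) * Real.sqrt (ρ x) - deriv h (ρ x) * (deriv (deriv h) (ρ x) / (2 * Real.sqrt (ρ x)) - deriv h (ρ x) / (4 * (ρ x * Real.sqrt (ρ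 x)))) * (1 / (2 * Real.sqrt (ρ x)))) / Real.sqrt (ρ x) ^ 2) * (pd i ρ x) * (∑ j, pd j ρ x * pd j ρ x) + (deriv h (ρ x) * (deriv (deriv h) (ρ x) / (2 * Real.sqrt (ρ x)) - deriv h (ρ x) / (4 * (ρ x * Real.sqrt (ρ x)))) / Real.sqrt (ρ x)) * (2 * (∑ j, pd j ρ x * pd i (fun y => pd j ρ y) x)) + (((deriv (deriv h) (ρ x) * (deriv h (ρ x) / (2 * Real.sqrt (ρ x))) + deriv h (ρ x) * (deriv (deriv h) (ρ x) / (2 * Real.sqrt (ρ x)) - deriv h (ρ x) / (4 * (ρ x * Real.sqrt (ρ x))))) * Real.sqrt (ρ x) - deriv h (ρ x) * (deriv h (ρ x) / (2 * Real.sqrt (ρ x))) * (1 / (2 * Real.sqrt (ρ x)))) / Real.sqrt (ρ x) ^ 2) * (pd i ρ x) * (∑ j, pd j (fun z => pd j ρ z) x) + (deriv h (ρ x) * (deriv h (ρ x) / (2 * Real.sqrt (ρ x))) / Real.sqrt (ρ x)) * (∑ j, pd i (fun y => pd j (fun z => pd j ρ z) y) x) := by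
    have hcong : (fun y => deriv h (ρ y) *
          dvg (fun z => deriv h (ρ z) • grad (fun w => Real.sqrt (ρ w)) z) y /
          Real.sqrt (ρ y)) =ᶠ[𝓝 x]
        (fun y => deriv h (ρ y) * (deriv (deriv h) (ρ y) / (2 * Real.sqrt (ρ y))
            - deriv h (ρ y) / (4 * (ρ y * Real.sqrt (ρ y)))) / Real.sqrt (ρ y)
            * (∑ j, pd j ρ y * pd j ρ y)
          + deriv h (ρ y) * (deriv h (ρ y) / (2 * Real.sqrt (ρ y))) / Real.sqrt (ρ y)
            * (∑ j, pd j (fun z => pd j ρ z) y)) := by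
      filter_upwards [hΩ.mem_nhds hx] with z hz
      rw [factB (h1 := deriv h) hΩ hρpos hρS hD_G (fun t ht => rfl) hz]
      ring
    show pd i _ x = _
    rw [pd_congr hcong,
      pd_add ((diffAt_comp hD_P hρx).fun_mul hσd) ((diffAt_comp hD_Q hρx).fun_mul hτd),
      pd_mul (diffAt_comp hD_P hρx) hσd, pd_mul (diffAt_comp hD_Q hρx) hτd,
      pd_comp hD_P hρx, pd_comp hD_Q hρx, epdσ, epdτ]
    ring
  -- RHS first term
  have hD_hf2 : HasDerivAt (fun t => h t * deriv (deriv φ) t)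
      (deriv h (ρ x) * deriv (deriv φ) (ρ x) + h (ρ x) * deriv (deriv (deriv φ)) (ρ x)) (ρ x) := (hD_h _ hrpos).mul (hD_f2 _ hrpos)
  have hD_hf1 : HasDerivAt (fun t => h t * deriv φ t)
      (deriv h (ρ x) * deriv φ (ρ x) + h (ρ x) * deriv (deriv φ) (ρ x)) (ρ x) := (hD_h _ hrpos).mul (hD_f1 _ hrpos)
  have ej : ∀ j : Fin d, pd j (fun y => h (ρ y) * hess (fun z => φ (ρ z)) y i j) x
      = ((deriv h (ρ x) * deriv (deriv φ) (ρ x) + h (ρ x) * deriv (deriv (deriv φ)) (ρ x)) * (pd i ρ x)) * (pd j ρ x * pd j ρ x)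
        + (h (ρ x) * deriv (deriv φ) (ρ x) + (deriv h (ρ x) * deriv φ (ρ x) + h (ρ x) * deriv (deriv φ) (ρ x))) * (pd j ρ x * pd i (fun y => pd j ρ y) x)
        + ((h (ρ x) * deriv (deriv φ) (ρ x)) * (pd i ρ x)) * pd j (fun z => pd j ρ z) x
        + (h (ρ x) * deriv φ (ρ x)) * pd i (fun y => pd j (fun z => pd j ρ z) y) x := by
    intro j
    have hcong : (fun y => h (ρ y) * hess (fun z => φ (ρ z)) y i j) =ᶠ[𝓝 x]
        (fun y => h (ρ y) * deriv (deriv φ) (ρ y) * (pd i ρ y * pd j ρ y)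
          + h (ρ y) * deriv φ (ρ y) * pd i (fun z => pd j ρ z) y) := by
      filter_upwards [hΩ.mem_nhds hx] with z hz
      rw [factHess hΩ hρpos hρS (hdiff1D φ hφS) hD_f1 hz i j]
      ring
    rw [pd_congr hcong,
      pd_add ((diffAt_comp hD_hf2 hρx).fun_mul ((hd1 i).fun_mul (hd1 j)))
        ((diffAt_comp hD_hf1 hρx).fun_mul (hd2 i j)),
      pd_mul (diffAt_comp hD_hf2 hρx) ((hd1 i).fun_mul (hd1 j)),
      pd_mul (diffAt_comp hD_hf1 hρx) (hd2 i j),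
      pd_comp hD_hf2 hρx, pd_comp hD_hf1 hρx, pd_mul (hd1 i) (hd1 j),
      pd_comm (i := j) (j := i) (f := ρ) hρat,
      pd_comm (i := j) (j := i) (f := fun z => pd j ρ z) (hP1at j)]
    ring
  have eR1 : dvgM (fun y i' j => h (ρ y) * hess (fun z => φ (ρ z)) y i' j) x i
      = (deriv h (ρ x) * deriv (deriv φ) (ρ x) + h (ρ x) * deriv (deriv (deriv φ)) (ρ x)) * (pd i ρ x) * (∑ j, pd j ρ x * pd j ρ x)
        + (h (ρ x) * deriv (deriv φ) (ρ x)) * ((pd i ρ x) * (∑ j, pd j (fun z => pd j ρ z) x) + (∑ j, pd j ρ x * pd i (fun y => pd j ρ y) x))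
        + (deriv h (ρ x) * deriv φ (ρ x) + h (ρ x) * deriv (deriv φ) (ρ x)) * (∑ j, pd j ρ x * pd i (fun y => pd j ρ y) x) + (h (ρ x) * deriv φ (ρ x)) * (∑ j, pd i (fun y => pd j (fun z => pd j ρ z) y) x) := by
    show (∑ j, pd j (fun y => h (ρ y) * hess (fun z => φ (ρ z)) y i j) x) = _
    rw [Finset.sum_congr rfl (fun j _ => ej j)]
    simp only [Finset.sum_add_distrib, ← Finset.mul_sum]
    ring
  -- RHS second term
  have hD_Fg : HasDerivAt (fun t => t * deriv h t - h t)
      (1 * deriv h (ρ x) + ρ x * deriv (deriv h) (ρ x) - deriv h (ρ x)) (ρ x) :=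
    ((hasDerivAt_id (ρ x)).mul (hD_h1 _ hrpos)).sub (hD_h _ hrpos)
  have eR2 : grad (fun y => (ρ y * deriv h (ρ y) - h (ρ y)) * lap (fun z => φ (ρ z)) y) x i
      = (1 * deriv h (ρ x) + ρ x * deriv (deriv h) (ρ x) - deriv h (ρ x)) * (pd i ρ x) * (deriv (deriv φ) (ρ x) * (∑ j, pd j ρ x * pd j ρ x) + deriv φ (ρ x) * (∑ j, pd j (fun z => pd j ρ z) x))
        + (ρ x * deriv h (ρ x) - h (ρ x)) * ((deriv (deriv (deriv φ)) (ρ x) * (pd i ρ x)) * (∑ j, pd j ρ x * pd j ρ x) + deriv (deriv φ) (ρ x) * (2 * (∑ j, pd j ρ x * pd i (fun y => pd j ρ y) x))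
          + (deriv (deriv φ) (ρ x) * (pd i ρ x)) * (∑ j, pd j (fun z => pd j ρ z) x) + deriv φ (ρ x) * (∑ j, pd i (fun y => pd j (fun z => pd j ρ z) y) x)) := by
    have hcong : (fun y => (ρ y * deriv h (ρ y) - h (ρ y)) * lap (fun z => φ (ρ z)) y)
        =ᶠ[𝓝 x] (fun y => (ρ y * deriv h (ρ y) - h (ρ y)) *
          (deriv (deriv φ) (ρ y) * (∑ j, pd j ρ y * pd j ρ y)
            + deriv φ (ρ y) * (∑ j, pd j (fun z => pd j ρ z) y))) := by
      filter_upwards [hΩ.mem_nhds hx] with z hz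
      rw [factLap hΩ hρpos hρS (hdiff1D φ hφS) hD_f1 hz]
    have hgd : DifferentiableAt ℝ (fun y => deriv (deriv φ) (ρ y) * (∑ j, pd j ρ y * pd j ρ y)
        + deriv φ (ρ y) * (∑ j, pd j (fun z => pd j ρ z) y)) x :=
      ((diffAt_comp (hD_f2 _ hrpos) hρx).mul hσd).add
        ((diffAt_comp (hD_f1 _ hrpos) hρx).mul hτd)
    show pd i _ x = _
    rw [pd_congr hcong, pd_mul (diffAt_comp hD_Fg hρx) hgd, pd_comp hD_Fg hρx,
      pd_add ((diffAt_comp (hD_f2 _ hrpos) hρx).fun_mul hσd)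
        ((diffAt_comp (hD_f1 _ hrpos) hρx).fun_mul hτd),
      pd_mul (diffAt_comp (hD_f2 _ hrpos) hρx) hσd,
      pd_mul (diffAt_comp (hD_f1 _ hrpos) hρx) hτd,
      pd_comp (hD_f2 _ hrpos) hρx, pd_comp (hD_f1 _ hrpos) hρx, epdσ, epdτ]
    ring
  rw [eL, eR1, eR2]
  exact keyalg (∑ j, pd j ρ x * pd j ρ x) (∑ j, pd j (fun z => pd j ρ z) x) (∑ j, pd i (fun y => pd j (fun z => pd j ρ z) y) x) (∑ j, pd j ρ x * pd i (fun y => pd j ρ y) x) (pd i ρ x) (ρ x) (Real.sqrt (ρ x)) (h (ρ x)) (deriv h (ρ x)) (deriv (deriv h) (ρ x)) (deriv (deriv (deriv h)) (ρ x))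
    (deriv φ (ρ x)) (deriv (deriv φ) (ρ x)) (deriv (deriv (deriv φ)) (ρ x)) (deriv h (ρ x) / (2 * Real.sqrt (ρ x))) (deriv (deriv h) (ρ x) / (2 * Real.sqrt (ρ x)) - deriv h (ρ x) / (4 * (ρ x * Real.sqrt (ρ x)))) ((deriv (deriv (deriv h)) (ρ x) * (2 * Real.sqrt (ρ x)) - deriv (deriv h) (ρ x) * (2 * (1 / (2 * Real.sqrt (ρ x))))) / (2 * Real.sqrt (ρ x)) ^ 2 - (deriv (deriv h) (ρ x) * (4 * (ρ x * Real.sqrt (ρ x))) - deriv h (ρ x) * (4 * (1 * Real.sqrt (ρ x) + ρ x * (1 / (2 * Real.sqrt (ρ x)))))) / (4 * (ρ x * Real.sqrt (ρ x))) ^ 2) (deriv h (ρ x) * (deriv (deriv h) (ρ x) / (2 * Real.sqrt (ρ x)) - deriv h (ρ x) / (4 * (ρ x * Real.sqrt (ρ x)))) / Real.sqrt (ρ x)) (deriv h (ρ x) * (deriv h (ρ x) / (2 * Real.sqrt (ρ x))) / Real.sqrt (ρ x)) (((deriv (deriv h) (ρ x) * (deriv (deriv h) (ρ x) / (2 * Real.sqrt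 (ρ x)) - deriv h (ρ x) / (4 * (ρ x * Real.sqrt (ρ x)))) + deriv h (ρ x) * ((deriv (deriv (deriv h)) (ρ x) * (2 * Real.sqrt (ρ x)) - deriv (deriv h) (ρ x) * (2 * (1 / (2 * Real.sqrt (ρ x))))) / (2 * Real.sqrt (ρ x)) ^ 2 - (deriv (deriv h) (ρ x) * (4 * (ρ x * Real.sqrt (ρ x))) - deriv h (ρ x) * (4 * (1 * Real.sqrt (ρ x) + ρ x * (1 / (2 * Real.sqrt (ρ x)))))) / (4 * (ρ x * Real.sqrt (ρ x))) ^ 2)) * Real.sqrt (ρ x) - deriv h (ρ x) * (deriv (deriv h) (ρ x) / (2 * Real.sqrt (ρ x)) - deriv h (ρ x) / (4 * (ρ x * Real.sqrt (ρ x)))) * (1 / (2 * Real.sqrt (ρ x)))) / Real.sqrt (ρ x) ^ 2) (((deriv (deriv h) (ρ x) * (deriv h (ρ x) / (2 * Real.sqrt (ρ x))) + deriv h (ρ x) * (deriv (deriv h) (ρ x) / (2 * Real.sqrt (ρ x)) - deriv h (ρ x) / (4 * (ρ x * Real.sqrt (ρ x))))) * Real.sqrt (ρ x) - deriv h (ρ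 x) * (deriv h (ρ x) / (2 * Real.sqrt (ρ x))) * (1 / (2 * Real.sqrt (ρ x)))) / Real.sqrt (ρ x) ^ 2)
    hepos hee rel1 (rel2 _ hrpos) rel3 rfl rfl rfl rfl rfl rfl rfl

end
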